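/- arXiv:2005.09001 — 5 statements merged into one kernel-verified Lean document; each statement's English description precedes it below -/
import Mathlib

section
/- For every four-dimensional Majorana spinor ε ∈ ℂ⁴ (i.e. conj(ε) = i(σ₁⊗I₂)ε), the vector bilinear K_A := i·ε̄·Γ_A·ε (A ∈ {+,−,1,2}) has real components, and it is a null vector with respect to the flat null metric: η^{AB}K_AK_B = 0, i.e. K₁² + K₂² = 2·K₊·K₋. -/
open Matrix Complex
open scoped Kronecker

noncomputable section

/-- Pauli matrix σ₁. -/
def σ1 : Matrix (Fin 2) (Fin 2) ℂ := !![0, 1; 1, 0]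
/-- Pauli matrix σ₂. -/
def σ2 : Matrix (Fin 2) (Fin 2) ℂ := !![0, -I; I, 0]
/-- Pauli matrix σ₃. -/
def σ3 : Matrix (Fin 2) (Fin 2) ℂ := !![1, 0; 0, -1]
/-- Three-dimensional gamma matrix γ₀ = i σ₃. -/
def γ0 : Matrix (Fin 2) (Fin 2) ℂ := I • σ3
/-- σ₊ = (σ₁ + i σ₂)/√2. -/
def σp : Matrix (Fin 2) (Fin 2) ℂ := ((Real.sqrt 2 : ℂ))⁻¹ • (σ1 + I • σ2)
/-- σ₋ = (σ₁ − i σ₂)/√2. -/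
def σm : Matrix (Fin 2) (Fin 2) ℂ := ((Real.sqrt 2 : ℂ))⁻¹ • (σ1 - I • σ2)

/-- Γ⁰ = −γ₀ ⊗ σ₁. -/
def Γ0 : Matrix (Fin 2 × Fin 2) (Fin 2 × Fin 2) ℂ := -(γ0 ⊗ₖ σ1)

/-- The gamma matrices Γ₊ = γ₀⊗σ₊, Γ₋ = γ₀⊗σ₋, Γ₁ = σ₁⊗I₂, Γ₂ = σ₂⊗I₂,
indexed in the order (+, −, 1, 2). -/
def Γ : Fin 4 → Matrix (Fin 2 × Fin 2) (Fin 2 × Fin 2) ℂ :=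
  ![γ0 ⊗ₖ σp, γ0 ⊗ₖ σm,
    σ1 ⊗ₖ (1 : Matrix (Fin 2) (Fin 2) ℂ), σ2 ⊗ₖ (1 : Matrix (Fin 2) (Fin 2) ℂ)]

/-- The inverse flat null metric η^{AB} in the index order (+, −, 1, 2). -/
def ηinv : Fin 4 → Fin 4 → ℂ := fun A B =>
  !![0, -1, 0, 0; -1, 0, 0, 0; 0, 0, 1, 0; 0, 0, 0, 1] A B

/-- A four-dimensional spinor ε ∈ ℂ⁴ is Majorana if its componentwise complex
conjugate satisfies conj(ε) = i (σ₁ ⊗ I₂) ε. -/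
def IsMajorana4 (ε : Fin 2 × Fin 2 → ℂ) : Prop :=
  star ε = (I • (σ1 ⊗ₖ (1 : Matrix (Fin 2) (Fin 2) ℂ))).mulVec ε

/-- The Dirac conjugate row vector ε̄ = i ε† Γ⁰. -/
def diracConj (ε : Fin 2 × Fin 2 → ℂ) : Fin 2 × Fin 2 → ℂ :=
  I • Matrix.vecMul (star ε) Γ0

/-- The vector bilinear K_A = i ε̄ Γ_A ε. -/
def Kvec (ε : Fin 2 × Fin 2 → ℂ) : Fin 4 → ℂ :=
  fun A => I * (diracConj ε ⬝ᵥ (Γ A).mulVec ε)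

/-!
The Majorana condition says conj ε(0,j) = i ε(1,j), so the lower half of ε is determined by the
upper half (a, b) = (ε(0,0), ε(0,1)): ε(1,j) = -i conj ε(0,j). Substituting, a direct computation gives
K₊ = -2√2 |b|², K₋ = -2√2 |a|², K₁ = 4 Re(ab), K₂ = -4 Im(ab), which are real, and
K₁² + K₂² = 16 |ab|² = 16 |a|² |b|² = 2 K₊ K₋.
-/

open ComplexConjugate

def majoranaSpinor (u : Fin 2 → ℂ) : Fin 2 × Fin 2 → ℂ :=
  fun p => ![u p.2, -I * conj (u p.2)] p.1

@[simp]
lemma majoranaSpinor_zero (u : Fin 2 → ℂ) (j : Fin 2) : majoranaSpinor u (0, j) = u j := rfl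

@[simp]
lemma majoranaSpinor_one (u : Fin 2 → ℂ) (j : Fin 2) :
    majoranaSpinor u (1, j) = -I * conj (u j) := rfl

lemma IsMajorana4.eq_majoranaSpinor {ε : Fin 2 × Fin 2 → ℂ} (hε : IsMajorana4 ε) :
    ε = majoranaSpinor (fun j => ε (0, j)) := by
  funext ⟨i, j⟩
  have h : conj (ε (0, j)) = I * ε (1, j) := by
    simpa [mulVec, dotProduct, Fintype.sum_prod_type, σ1, one_apply] using congrFun hε (0, j)
  fin_cases i
  · rfl
  · simp [h, ← mul_assoc]

def majoranaKvec (u : Fin 2 → ℂ) : Fin 4 → ℝ :=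
  ![-(2 * √2 * normSq (u 1)), -(2 * √2 * normSq (u 0)), 4 * (u 0 * u 1).re, -(4 * (u 0 * u 1).im)]

lemma Kvec_majoranaSpinor (u : Fin 2 → ℂ) (A : Fin 4) :
    Kvec (majoranaSpinor u) A = majoranaKvec u A := by
  fin_cases A <;> apply Complex.ext <;>
    simp [Kvec, diracConj, Γ, Γ0, γ0, σ1, σ2, σ3, σp, σm, majoranaKvec, mulVec, vecMul, dotProduct,
      Fintype.sum_prod_type, normSq_apply] <;> ring

lemma majoranaKvec_null (u : Fin 2 → ℂ) :
    majoranaKvec u 2 ^ 2 + majoranaKvec u 3 ^ 2 = 2 * majoranaKvec u 0 * majoranaKvec u 1 := by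
  have hsqrt : √2 ^ 2 = 2 := Real.sq_sqrt zero_le_two
  have hmul : (u 0 * u 1).re ^ 2 + (u 0 * u 1).im ^ 2 = normSq (u 0) * normSq (u 1) := by
    rw [← normSq_mul, normSq_apply]; ring
  simp only [majoranaKvec, cons_val]
  linear_combination 16 * hmul - 8 * normSq (u 0) * normSq (u 1) * hsqrt

lemma sum_ηinv_mul_mul (K : Fin 4 → ℂ) :
    ∑ A : Fin 4, ∑ B : Fin 4, ηinv A B * K A * K B = K 2 ^ 2 + K 3 ^ 2 - 2 * K 0 * K 1 := by
  simp only [ηinv, of_apply, cons_val', cons_val_fin_one, Fin.sum_univ_four, cons_val_zero,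
    cons_val_one, cons_val, zero_mul, neg_mul, one_mul, zero_add, add_zero]
  ring

/-- For every four-dimensional Majorana spinor ε, the vector bilinear K_A = i ε̄ Γ_A ε
has real components and is null with respect to the flat null metric:
η^{AB} K_A K_B = 0, i.e. K₁² + K₂² = 2 K₊ K₋. -/
theorem majorana_vector_bilinear_null (ε : Fin 2 × Fin 2 → ℂ) (hε : IsMajorana4 ε) :
    (∀ A : Fin 4, (Kvec ε A).im = 0) ∧
    (∑ A : Fin 4, ∑ B : Fin 4, ηinv A B * Kvec ε A * Kvec ε B = 0) ∧
    (Kvec ε 2) ^ 2 + (Kvec ε 3) ^ 2 = 2 * Kvec ε 0 * Kvec ε 1 := by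
  have hK (A : Fin 4) : Kvec ε A = majoranaKvec (fun j => ε (0, j)) A := by
    rw [← Kvec_majoranaSpinor, ← hε.eq_majoranaSpinor]
  have hnull : Kvec ε 2 ^ 2 + Kvec ε 3 ^ 2 = 2 * Kvec ε 0 * Kvec ε 1 := by
    simp only [hK]
    exact_mod_cast majoranaKvec_null _
  refine ⟨fun A => by rw [hK]; exact ofReal_im _, ?_, hnull⟩
  rw [sum_ηinv_mul_mul, hnull, sub_self]
end
end

section
/- If ζ ∈ ℂ² is a nonzero Majorana spinor, then ζ is an eigenvector of the bilinear-contracted gamma matrices: (X₁(ζ)·σ₁ + X₂(ζ)·σ₂)·ζ = ζ and (Y₁(ζ)·σ₁ + Y₂(ζ)·σ₂)·ζ = (i·σ₃)·ζ. -/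
open Matrix Complex

noncomputable section

/-- A spinor ζ ∈ ℂ² is Majorana if conj(ζ) = i σ₁ ζ componentwise. -/
def IsMajorana (ζ : Fin 2 → ℂ) : Prop := star ζ = (I • σ1).mulVec ζ

/-- The bilinear N(ζ) = ζ†ζ. -/
def Nbil (ζ : Fin 2 → ℂ) : ℂ := star ζ ⬝ᵥ ζ

/-- The bilinear X₁(ζ) = (ζ†σ₁ζ)/N(ζ). -/
def X1 (ζ : Fin 2 → ℂ) : ℂ := (star ζ ⬝ᵥ σ1.mulVec ζ) / Nbil ζ

/-- The bilinear X₂(ζ) = (ζ†σ₂ζ)/N(ζ). -/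
def X2 (ζ : Fin 2 → ℂ) : ℂ := (star ζ ⬝ᵥ σ2.mulVec ζ) / Nbil ζ

/-- Y₁(ζ) = X₂(ζ). -/
def Y1 (ζ : Fin 2 → ℂ) : ℂ := X2 ζ

/-- Y₂(ζ) = −X₁(ζ). -/
def Y2 (ζ : Fin 2 → ℂ) : ℂ := -X1 ζ
/-! For every ζ ∈ ℂ², the Fierz identity ζζ† = (N + Σₖ (ζ†σₖζ) σₖ)/2 gives
(Σₖ (ζ†σₖζ) σₖ) ζ = N ζ. The Majorana condition forces ζ†σ₃ζ = 0, which leaves the first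
eigenvalue equation; the second follows from it because iσ₃ (x σ₁ + y σ₂) = y σ₁ − x σ₂. -/

theorem σ1_mulVec (v : Fin 2 → ℂ) : σ1 *ᵥ v = ![v 1, v 0] := by
  ext i; fin_cases i <;> simp [σ1, mulVec, dotProduct, Fin.sum_univ_two]

theorem σ2_mulVec (v : Fin 2 → ℂ) : σ2 *ᵥ v = ![-I * v 1, I * v 0] := by
  ext i; fin_cases i <;> simp [σ2, mulVec, dotProduct, Fin.sum_univ_two]

theorem σ3_mulVec (v : Fin 2 → ℂ) : σ3 *ᵥ v = ![v 0, -v 1] := by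
  ext i; fin_cases i <;> simp [σ3, mulVec, dotProduct, Fin.sum_univ_two]

theorem pauli_bilinears_mulVec (ζ : Fin 2 → ℂ) :
    ((star ζ ⬝ᵥ σ1 *ᵥ ζ) • σ1 + (star ζ ⬝ᵥ σ2 *ᵥ ζ) • σ2 + (star ζ ⬝ᵥ σ3 *ᵥ ζ) • σ3) *ᵥ ζ =
      Nbil ζ • ζ := by
  simp only [add_mulVec, smul_mulVec, σ1_mulVec, σ2_mulVec, σ3_mulVec, Nbil, vec2_dotProduct,
    smul_vec2, vec2_add, Pi.star_apply, RCLike.star_def, cons_val_zero, cons_val_one, smul_eq_mul]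
  ext i
  fin_cases i <;> simp only [Fin.zero_eta, Fin.mk_one, cons_val_zero, cons_val_one, cons_val_fin_one,
    Pi.smul_apply, smul_eq_mul]
  · linear_combination (starRingEnd ℂ (ζ 0) * ζ 1 - starRingEnd ℂ (ζ 1) * ζ 0) * ζ 1 * I_sq
  · linear_combination (starRingEnd ℂ (ζ 1) * ζ 0 - starRingEnd ℂ (ζ 0) * ζ 1) * ζ 0 * I_sq

theorem IsMajorana.dotProduct_σ3_mulVec {ζ : Fin 2 → ℂ} (hM : IsMajorana ζ) :
    star ζ ⬝ᵥ σ3 *ᵥ ζ = 0 := by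
  rw [IsMajorana, smul_mulVec, σ1_mulVec, smul_vec2] at hM
  rw [vec2_dotProduct, hM, σ3_mulVec]
  simp only [cons_val_zero, cons_val_one, cons_val_fin_one, smul_eq_mul]
  ring

open scoped ComplexOrder in
theorem IsMajorana.X_smul_pauli_mulVec_self {ζ : Fin 2 → ℂ} (hM : IsMajorana ζ) :
    (X1 ζ • σ1 + X2 ζ • σ2) *ᵥ ζ = ζ := by
  rcases eq_or_ne ζ 0 with rfl | hζ
  · exact mulVec_zero _
  have hN : Nbil ζ ≠ 0 := dotProduct_star_self_eq_zero.not.mpr hζ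
  have hFierz := pauli_bilinears_mulVec ζ
  rw [hM.dotProduct_σ3_mulVec, zero_smul, add_zero] at hFierz
  calc (X1 ζ • σ1 + X2 ζ • σ2) *ᵥ ζ
      = (Nbil ζ)⁻¹ • (((star ζ ⬝ᵥ σ1 *ᵥ ζ) • σ1 + (star ζ ⬝ᵥ σ2 *ᵥ ζ) • σ2) *ᵥ ζ) := by
        rw [← smul_mulVec, smul_add, smul_smul, smul_smul, X1, X2, div_eq_inv_mul,
          div_eq_inv_mul]
    _ = ζ := by rw [hFierz, smul_smul, inv_mul_cancel₀ hN, one_smul]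

theorem I_smul_σ3_mul (x y : ℂ) : (I • σ3) * (x • σ1 + y • σ2) = y • σ1 + (-x) • σ2 := by
  ext i j
  fin_cases i <;> fin_cases j <;> simp [σ1, σ2, σ3] <;> linear_combination -y * I_sq

theorem majorana_eigenvector_of_bilinears_general (ζ : Fin 2 → ℂ)
    (hM : IsMajorana ζ) :
    (X1 ζ • σ1 + X2 ζ • σ2).mulVec ζ = ζ ∧
    (Y1 ζ • σ1 + Y2 ζ • σ2).mulVec ζ = (I • σ3).mulVec ζ := by
  have hX := hM.X_smul_pauli_mulVec_self
  refine ⟨hX, ?_⟩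
  rw [Y1, Y2, ← I_smul_σ3_mul, ← mulVec_mulVec, hX]

/-- A nonzero Majorana spinor ζ is an eigenvector of the bilinear-contracted gamma
matrices: (X₁(ζ)σ₁ + X₂(ζ)σ₂)ζ = ζ and (Y₁(ζ)σ₁ + Y₂(ζ)σ₂)ζ = (iσ₃)ζ = γ₀ζ. -/
theorem majorana_eigenvector_of_bilinears (ζ : Fin 2 → ℂ) (hζ : ζ ≠ 0)
    (hM : IsMajorana ζ) :
    (X1 ζ • σ1 + X2 ζ • σ2).mulVec ζ = ζ ∧
    (Y1 ζ • σ1 + Y2 ζ • σ2).mulVec ζ = (I • σ3).mulVec ζ :=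
  majorana_eigenvector_of_bilinears_general ζ hM
end
end

section
/- Let ζ ∈ ℂ² be a nonzero Majorana spinor and X = (X₁,X₂) ∈ ℝ² satisfy (X₁σ₁ + X₂σ₂)·ζ = ζ. Then X coincides with the bilinear vector of ζ: X₁ = (ζ†σ₁ζ)/(ζ†ζ) and X₂ = (ζ†σ₂ζ)/(ζ†ζ); in particular X is a unit vector. -/
/-!
For real `X` the matrix `M = X₁σ₁ + X₂σ₂` is Hermitian, so `Mζ = ζ` also gives `ζ†M = ζ†`, and
then `ζ†(σᵢM + Mσᵢ)ζ = 2 ζ†σᵢζ`. The Pauli matrices anticommute and square to `1`, so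
`σᵢM + Mσᵢ = 2Xᵢ` and `M² = X₁² + X₂²`; the first identity gives the bilinear vector, and
`ζ = M²ζ` with `ζ ≠ 0` gives `|X| = 1`.
-/

open Matrix Complex

noncomputable section

open scoped ComplexOrder

section Expectation

variable {n : Type*} [Fintype n]

theorem star_dotProduct_anticomm_mulVec_of_mulVec_eq_self {R : Type*} [Semiring R] [StarRing R]
    {A M : Matrix n n R} {ζ : n → R} (hM : M.IsHermitian) (hζ : M *ᵥ ζ = ζ) :
    star ζ ⬝ᵥ (A * M + M * A) *ᵥ ζ = 2 * (star ζ ⬝ᵥ A *ᵥ ζ) := by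
  have hζ_star : star ζ ᵥ* M = star ζ := by
    rw [← hM.eq, ← star_mulVec, hζ]
  rw [add_mulVec, dotProduct_add, ← mulVec_mulVec, ← mulVec_mulVec, hζ,
    dotProduct_mulVec (star ζ) M, hζ_star, two_mul]

theorem eq_div_of_anticomm_eq_smul_one {K : Type*} [Field K] [CharZero K] [StarRing K]
    [DecidableEq n] {A M : Matrix n n K} {ζ : n → K} {c : K} (hM : M.IsHermitian)
    (hMζ : M *ᵥ ζ = ζ) (hζ : star ζ ⬝ᵥ ζ ≠ 0) (hAM : A * M + M * A = (2 * c) • 1) :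
    c = (star ζ ⬝ᵥ A *ᵥ ζ) / (star ζ ⬝ᵥ ζ) := by
  have h := star_dotProduct_anticomm_mulVec_of_mulVec_eq_self (A := A) hM hMζ
  rw [hAM, smul_mulVec, one_mulVec, dotProduct_smul, smul_eq_mul] at h
  rw [eq_div_iff hζ]
  linear_combination h / 2

theorem eq_one_of_mul_self_eq_smul_one {R : Type*} [CommRing R] [IsDomain R] [DecidableEq n]
    {M : Matrix n n R} {ζ : n → R} {c : R} (hMM : M * M = c • 1) (hMζ : M *ᵥ ζ = ζ)
    (hζ : ζ ≠ 0) : c = 1 := by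
  have h : c • ζ = (1 : R) • ζ :=
    calc c • ζ = (c • (1 : Matrix n n R)) *ᵥ ζ := by rw [smul_mulVec, one_mulVec]
      _ = M *ᵥ M *ᵥ ζ := by rw [← hMM, mulVec_mulVec]
      _ = (1 : R) • ζ := by rw [hMζ, hMζ, one_smul]
  exact smul_left_injective R hζ h

end Expectation

section Clifford

variable {R A : Type*} [CommRing R] [Ring A] [Algebra R A] {a b : A}

theorem smul_add_smul_anticomm_left (ha : a * a = 1) (hab : a * b + b * a = 0) (x y : R) :
    a * (x • a + y • b) + (x • a + y • b) * a = (2 * x) • 1 := by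
  simp only [mul_add, add_mul, mul_smul_comm, smul_mul_assoc, ha]
  linear_combination (norm := module) y • hab

theorem smul_add_smul_mul_self (ha : a * a = 1) (hb : b * b = 1) (hab : a * b + b * a = 0)
    (x y : R) : (x • a + y • b) * (x • a + y • b) = (x ^ 2 + y ^ 2) • 1 := by
  simp only [mul_add, add_mul, mul_smul_comm, smul_mul_assoc, ha, hb]
  linear_combination (norm := module) (x * y) • hab

end Clifford

theorem σ1_isHermitian : σ1.IsHermitian := by
  ext i j; fin_cases i <;> fin_cases j <;> simp [σ1]

theorem σ2_isHermitian : σ2.IsHermitian := by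
  ext i j; fin_cases i <;> fin_cases j <;> simp [σ2]

theorem σ1_mul_self : σ1 * σ1 = 1 := by
  ext i j; fin_cases i <;> fin_cases j <;> simp [σ1]

theorem σ2_mul_self : σ2 * σ2 = 1 := by
  ext i j; fin_cases i <;> fin_cases j <;> simp [σ2]

theorem σ1_mul_σ2_add_σ2_mul_σ1 : σ1 * σ2 + σ2 * σ1 = 0 := by
  ext i j; fin_cases i <;> fin_cases j <;> simp [σ1, σ2]

theorem eigenvector_determines_bilinear_general (ζ : Fin 2 → ℂ) (hζ : ζ ≠ 0)
    (X1 X2 : ℝ) (hX : ((X1 : ℂ) • σ1 + (X2 : ℂ) • σ2).mulVec ζ = ζ) :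
    (X1 : ℂ) = (star ζ ⬝ᵥ σ1.mulVec ζ) / (star ζ ⬝ᵥ ζ) ∧
    (X2 : ℂ) = (star ζ ⬝ᵥ σ2.mulVec ζ) / (star ζ ⬝ᵥ ζ) ∧
    X1 ^ 2 + X2 ^ 2 = 1 := by
  set M := (X1 : ℂ) • σ1 + (X2 : ℂ) • σ2 with hM_def
  have hM : M.IsHermitian :=
    (σ1_isHermitian.smul (conj_ofReal X1)).add (σ2_isHermitian.smul (conj_ofReal X2))
  have hζ_norm : star ζ ⬝ᵥ ζ ≠ 0 := dotProduct_star_self_eq_zero.not.mpr hζ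
  have hσ21 : σ2 * σ1 + σ1 * σ2 = 0 := by rw [add_comm, σ1_mul_σ2_add_σ2_mul_σ1]
  have hσ1M : σ1 * M + M * σ1 = (2 * (X1 : ℂ)) • 1 :=
    smul_add_smul_anticomm_left (R := ℂ) σ1_mul_self σ1_mul_σ2_add_σ2_mul_σ1 _ _
  have hσ2M : σ2 * M + M * σ2 = (2 * (X2 : ℂ)) • 1 := by
    rw [hM_def, add_comm ((X1 : ℂ) • σ1)]
    exact smul_add_smul_anticomm_left σ2_mul_self hσ21 _ _
  have hMM : M * M = ((X1 : ℂ) ^ 2 + (X2 : ℂ) ^ 2) • 1 :=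
    smul_add_smul_mul_self σ1_mul_self σ2_mul_self σ1_mul_σ2_add_σ2_mul_σ1 _ _
  refine ⟨eq_div_of_anticomm_eq_smul_one hM hX hζ_norm hσ1M,
    eq_div_of_anticomm_eq_smul_one hM hX hζ_norm hσ2M, ?_⟩
  exact_mod_cast eq_one_of_mul_self_eq_smul_one hMM hX hζ

/-- Let ζ be a nonzero Majorana spinor and X ∈ ℝ² with (X₁σ₁ + X₂σ₂)ζ = ζ. Then X
coincides with the bilinear vector of ζ: X₁ = (ζ†σ₁ζ)/(ζ†ζ) and X₂ = (ζ†σ₂ζ)/(ζ†ζ);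
in particular X is a unit vector. -/
theorem eigenvector_determines_bilinear (ζ : Fin 2 → ℂ) (hζ : ζ ≠ 0) (hM : IsMajorana ζ)
    (X1 X2 : ℝ) (hX : ((X1 : ℂ) • σ1 + (X2 : ℂ) • σ2).mulVec ζ = ζ) :
    (X1 : ℂ) = (star ζ ⬝ᵥ σ1.mulVec ζ) / (star ζ ⬝ᵥ ζ) ∧
    (X2 : ℂ) = (star ζ ⬝ᵥ σ2.mulVec ζ) / (star ζ ⬝ᵥ ζ) ∧
    X1 ^ 2 + X2 ^ 2 = 1 :=
  eigenvector_determines_bilinear_general ζ hζ X1 X2 hX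
end
end

section
/- Let ζ ∈ ℂ² be a nonzero Majorana spinor, let a,b ∈ ℝ with (a,b) ≠ (0,0), and set χ = a·ζ + b·(i·σ₃)·ζ. Then χ is a nonzero Majorana spinor, N(χ) = (a² + b²)·N(ζ), and the bilinear vector of χ is a rotation of that of ζ: X₁(χ) = ((a² − b²)·X₁(ζ) + 2ab·X₂(ζ))/(a² + b²) and X₂(χ) = (−2ab·X₁(ζ) + (a² − b²)·X₂(ζ))/(a² + b²); in particular X₁(χ)² + X₂(χ)² = 1. -/
open Matrix Complex

noncomputable section

/-! Write w = a + b·i, so that χ = diag(w, w̄)·ζ. For every spinor this multiplies N by |w|² and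
turns the pair (ζ†σ₁ζ, ζ†σ₂ζ) by the rotation w²/|w|², as one reads off from χ₀ = wζ₀,
χ₁ = w̄ζ₁. Majorana spinors form a real subspace stable under iσ₃, and on it
(ζ†σ₁ζ)² + (ζ†σ₂ζ)² = N(ζ)², so their bilinear vector is a unit vector. -/

open ComplexConjugate

def spinRotation (a b : ℝ) (ζ : Fin 2 → ℂ) : Fin 2 → ℂ :=
  (a : ℂ) • ζ + (b : ℂ) • (I • σ3).mulVec ζ

section Bilinears

variable (ξ : Fin 2 → ℂ)

lemma Nbil_eq : Nbil ξ = conj (ξ 0) * ξ 0 + conj (ξ 1) * ξ 1 := by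
  simp [Nbil, dotProduct, Fin.sum_univ_two]

lemma star_dotProduct_σ1_mulVec :
    star ξ ⬝ᵥ σ1.mulVec ξ = conj (ξ 0) * ξ 1 + conj (ξ 1) * ξ 0 := by
  simp [σ1, mulVec, dotProduct, Fin.sum_univ_two]

lemma star_dotProduct_σ2_mulVec :
    star ξ ⬝ᵥ σ2.mulVec ξ = I * (conj (ξ 1) * ξ 0 - conj (ξ 0) * ξ 1) := by
  simp [σ2, mulVec, dotProduct, Fin.sum_univ_two, mul_sub, mul_left_comm I, neg_add_eq_sub]

open scoped ComplexOrder in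
lemma Nbil_eq_zero_iff {ξ : Fin 2 → ℂ} : Nbil ξ = 0 ↔ ξ = 0 :=
  dotProduct_star_self_eq_zero

end Bilinears

section Rotation

variable (a b : ℝ) (ζ : Fin 2 → ℂ)

lemma spinRotation_apply_zero : spinRotation a b ζ 0 = (a + b * I) * ζ 0 := by
  simp [spinRotation, σ3, dotProduct, Fin.sum_univ_two, add_mul, mul_assoc]

lemma spinRotation_apply_one : spinRotation a b ζ 1 = (a - b * I) * ζ 1 := by
  simp [spinRotation, σ3, dotProduct, Fin.sum_univ_two, sub_mul, mul_assoc, ← sub_eq_add_neg]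

lemma Nbil_spinRotation :
    Nbil (spinRotation a b ζ) = ((a ^ 2 + b ^ 2 : ℝ) : ℂ) * Nbil ζ := by
  simp only [Nbil_eq, spinRotation_apply_zero, spinRotation_apply_one, map_mul, map_add, map_sub,
    conj_ofReal, conj_I]
  push_cast
  linear_combination (-(b : ℂ) ^ 2 * (conj (ζ 0) * ζ 0 + conj (ζ 1) * ζ 1)) * I_sq

lemma star_dotProduct_σ1_mulVec_spinRotation :
    star (spinRotation a b ζ) ⬝ᵥ σ1.mulVec (spinRotation a b ζ) =
      ((a ^ 2 - b ^ 2 : ℝ) : ℂ) * (star ζ ⬝ᵥ σ1.mulVec ζ) +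
        ((2 * a * b : ℝ) : ℂ) * (star ζ ⬝ᵥ σ2.mulVec ζ) := by
  simp only [star_dotProduct_σ1_mulVec, star_dotProduct_σ2_mulVec, spinRotation_apply_zero,
    spinRotation_apply_one, map_mul, map_add, map_sub, conj_ofReal, conj_I]
  push_cast
  linear_combination ((b : ℂ) ^ 2 * (conj (ζ 0) * ζ 1 + conj (ζ 1) * ζ 0)) * I_sq

lemma star_dotProduct_σ2_mulVec_spinRotation :
    star (spinRotation a b ζ) ⬝ᵥ σ2.mulVec (spinRotation a b ζ) =
      -((2 * a * b : ℝ) : ℂ) * (star ζ ⬝ᵥ σ1.mulVec ζ) +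
        ((a ^ 2 - b ^ 2 : ℝ) : ℂ) * (star ζ ⬝ᵥ σ2.mulVec ζ) := by
  simp only [star_dotProduct_σ1_mulVec, star_dotProduct_σ2_mulVec, spinRotation_apply_zero,
    spinRotation_apply_one, map_mul, map_add, map_sub, conj_ofReal, conj_I]
  push_cast
  linear_combination (I * (b : ℂ) ^ 2 * (conj (ζ 1) * ζ 0 - conj (ζ 0) * ζ 1)
      + 2 * a * b * (conj (ζ 0) * ζ 1 + conj (ζ 1) * ζ 0)) * I_sq

lemma X1_spinRotation :
    X1 (spinRotation a b ζ) = (((a ^ 2 - b ^ 2 : ℝ) : ℂ) * X1 ζ + ((2 * a * b : ℝ) : ℂ) * X2 ζ)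
      / ((a ^ 2 + b ^ 2 : ℝ) : ℂ) := by
  rw [X1, X1, X2, star_dotProduct_σ1_mulVec_spinRotation, Nbil_spinRotation]
  ring

lemma X2_spinRotation :
    X2 (spinRotation a b ζ) = (-((2 * a * b : ℝ) : ℂ) * X1 ζ + ((a ^ 2 - b ^ 2 : ℝ) : ℂ) * X2 ζ)
      / ((a ^ 2 + b ^ 2 : ℝ) : ℂ) := by
  rw [X2, X1, X2, star_dotProduct_σ2_mulVec_spinRotation, Nbil_spinRotation]
  ring

end Rotation

lemma isMajorana_iff {ξ : Fin 2 → ℂ} :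
    IsMajorana ξ ↔ conj (ξ 0) = I * ξ 1 ∧ conj (ξ 1) = I * ξ 0 := by
  simp [IsMajorana, funext_iff, Fin.forall_fin_two, σ1, dotProduct, Fin.sum_univ_two]

namespace IsMajorana

variable {ξ η : Fin 2 → ℂ}

lemma add (hξ : IsMajorana ξ) (hη : IsMajorana η) : IsMajorana (ξ + η) := by
  rw [IsMajorana, star_add, mulVec_add, hξ, hη]

lemma ofReal_smul (hξ : IsMajorana ξ) (a : ℝ) : IsMajorana ((a : ℂ) • ξ) := by
  rw [IsMajorana, star_smul, mulVec_smul, hξ, RCLike.star_def, conj_ofReal]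

lemma I_smul_σ3_mulVec (hξ : IsMajorana ξ) : IsMajorana ((I • σ3).mulVec ξ) := by
  obtain ⟨h0, h1⟩ := isMajorana_iff.mp hξ
  refine isMajorana_iff.mpr ⟨?_, ?_⟩ <;>
    simp [σ3, mulVec, dotProduct, Fin.sum_univ_two, h0, h1]

lemma spinRotation (hξ : IsMajorana ξ) (a b : ℝ) : IsMajorana (spinRotation a b ξ) :=
  (hξ.ofReal_smul a).add (hξ.I_smul_σ3_mulVec.ofReal_smul b)

lemma sq_add_sq (hξ : IsMajorana ξ) :
    (star ξ ⬝ᵥ σ1.mulVec ξ) ^ 2 + (star ξ ⬝ᵥ σ2.mulVec ξ) ^ 2 = Nbil ξ ^ 2 := by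
  obtain ⟨h0, h1⟩ := isMajorana_iff.mp hξ
  rw [star_dotProduct_σ1_mulVec, star_dotProduct_σ2_mulVec, Nbil_eq, h0, h1]
  linear_combination I ^ 2 * (ξ 0 ^ 2 - ξ 1 ^ 2) ^ 2 * I_sq

lemma X1_sq_add_X2_sq (hξ : IsMajorana ξ) (hξ0 : ξ ≠ 0) : X1 ξ ^ 2 + X2 ξ ^ 2 = 1 := by
  rw [X1, X2, div_pow, div_pow, ← add_div, hξ.sq_add_sq]
  exact div_self (pow_ne_zero 2 (Nbil_eq_zero_iff.not.mpr hξ0))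

end IsMajorana

/-- Let ζ be a nonzero Majorana spinor, (a,b) ≠ (0,0) real, and χ = a·ζ + b·(iσ₃)ζ. Then
χ is a nonzero Majorana spinor, N(χ) = (a² + b²)N(ζ), and the bilinear vector of χ is a
rotation of that of ζ; in particular it is still a unit vector. -/
theorem majorana_bilinear_rotation (ζ : Fin 2 → ℂ) (hζ : ζ ≠ 0) (hM : IsMajorana ζ)
    (a b : ℝ) (hab : (a, b) ≠ (0, 0)) :
    let χ : Fin 2 → ℂ := (a : ℂ) • ζ + (b : ℂ) • (I • σ3).mulVec ζ
    χ ≠ 0 ∧ IsMajorana χ ∧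
    Nbil χ = ((a ^ 2 + b ^ 2 : ℝ) : ℂ) * Nbil ζ ∧
    X1 χ = (((a ^ 2 - b ^ 2 : ℝ) : ℂ) * X1 ζ + ((2 * a * b : ℝ) : ℂ) * X2 ζ)
      / ((a ^ 2 + b ^ 2 : ℝ) : ℂ) ∧
    X2 χ = (-((2 * a * b : ℝ) : ℂ) * X1 ζ + ((a ^ 2 - b ^ 2 : ℝ) : ℂ) * X2 ζ)
      / ((a ^ 2 + b ^ 2 : ℝ) : ℂ) ∧
    X1 χ ^ 2 + X2 χ ^ 2 = 1 := by
  intro χ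
  have hχ : IsMajorana χ := hM.spinRotation a b
  have hN : Nbil χ = ((a ^ 2 + b ^ 2 : ℝ) : ℂ) * Nbil ζ := Nbil_spinRotation a b ζ
  have hab' : a ^ 2 + b ^ 2 ≠ 0 := by
    rw [sq, sq, Ne, mul_self_add_mul_self_eq_zero]
    simpa using hab
  have hχ0 : χ ≠ 0 := by
    rw [Ne, ← Nbil_eq_zero_iff, hN]
    exact mul_ne_zero (ofReal_ne_zero.mpr hab') (Nbil_eq_zero_iff.not.mpr hζ)
  exact ⟨hχ0, hχ, hN, X1_spinRotation a b ζ, X2_spinRotation a b ζ, hχ.X1_sq_add_X2_sq hχ0⟩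
end
end

section
/- Let ζ ∈ ℂ² be nonzero, let X = (X₁,X₂) ∈ ℝ² with (X₁σ₁ + X₂σ₂)·ζ = ζ, and let u ∈ ℂ. If ( Im(u)·I₂ + Re(u)·(i·σ₃) )·( I₂ − X₁σ₁ − X₂σ₂ )·( (i·σ₃)·ζ ) = 0, then u = 0. -/
open Matrix Complex

noncomputable section

/-- Let ζ ∈ ℂ² be nonzero with (X₁σ₁ + X₂σ₂)ζ = ζ for some real X, and let u ∈ ℂ. If
( Im(u)·I₂ + Re(u)·(iσ₃) )( I₂ − X₁σ₁ − X₂σ₂ )(iσ₃ζ) = 0, then u = 0. -/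
theorem two_killing_spinors_force_u_zero (ζ : Fin 2 → ℂ) (hζ : ζ ≠ 0) (X1 X2 : ℝ)
    (hX : ((X1 : ℂ) • σ1 + (X2 : ℂ) • σ2).mulVec ζ = ζ) (u : ℂ)
    (h : (((u.im : ℂ) • (1 : Matrix (Fin 2) (Fin 2) ℂ) + (u.re : ℂ) • (I • σ3))
        * ((1 : Matrix (Fin 2) (Fin 2) ℂ) - (X1 : ℂ) • σ1 - (X2 : ℂ) • σ2)).mulVec
        ((I • σ3).mulVec ζ) = 0) :
    u = 0 := by
  have hX0 := congrFun hX 0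
  have hX1 := congrFun hX 1
  have h0 := congrFun h 0
  have h1 := congrFun h 1
  simp [σ1, σ2, σ3, mulVec, dotProduct, Fin.sum_univ_two, Matrix.mul_apply,
    Matrix.one_apply, Pi.zero_apply] at hX0 hX1 h0 h1
  have eA : 2 * I * (ζ 0 * ((u.im : ℂ) + u.re * I)) = 0 := by
    linear_combination h0 - I * ((u.im : ℂ) + u.re * I) * hX0
  have eB : 2 * I * (ζ 1 * ((u.im : ℂ) - u.re * I)) = 0 := by
    linear_combination -h1 - I * ((u.im : ℂ) - u.re * I) * hX1
  have hI : (2 : ℂ) * I ≠ 0 := by simp [I_ne_zero]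
  have key : ((u.im : ℂ) + u.re * I = 0) ∨ ((u.im : ℂ) - u.re * I = 0) := by
    rcases (by
      by_contra hc
      push_neg at hc
      apply hζ
      funext i
      fin_cases i <;> simp [hc.1, hc.2] : ζ 0 ≠ 0 ∨ ζ 1 ≠ 0) with h' | h'
    · left
      have := mul_eq_zero.mp ((mul_eq_zero.mp eA).resolve_left hI)
      exact this.resolve_left h'
    · right
      have := mul_eq_zero.mp ((mul_eq_zero.mp eB).resolve_left hI)
      exact this.resolve_left h'
  rcases key with hk | hk <;>
  · have hre := congrArg Complex.re hk
    have him := congrArg Complex.im hk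
    simp at hre him
    exact Complex.ext him hre
end
end
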